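/- arXiv:2110.06584 — 3 statements merged into one kernel-verified Lean document; each statement's English description precedes it below -/
import Mathlib

section
/- Let γ ≥ 1 and R, Q ≥ 0 with R + Q > 0. Then there exists a unique Z > 0 with Z ≥ R such that Q = (1 - R/Z) · Z^γ. -/
open Real

/-- The algebraic pressure closure `Q = (1 - R/Z) Z^γ` has a unique solution
`Z > 0` with `R ≤ Z`, provided `γ ≥ 1`, `R, Q ≥ 0` and `R + Q > 0`. -/
theorem exists_unique_Z (γ R Q : ℝ) (hγ : 1 ≤ γ) (hR : 0 ≤ R) (hQ : 0 ≤ Q)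
    (hpos : 0 < R + Q) :
    ∃! Z : ℝ, 0 < Z ∧ R ≤ Z ∧ Q = (1 - R / Z) * Z ^ γ := by
  set p := γ - 1 with hp
  have hp0 : 0 ≤ p := by simp [hp]; linarith
  -- strict monotonicity of the auxiliary function z ↦ z^p * (z - R)
  have hmono : ∀ x y : ℝ, 0 < x → R ≤ x → x < y →
      x ^ p * (x - R) < y ^ p * (y - R) := by
    intro x y hx hRx hxy
    have h1 : x ^ p ≤ y ^ p := Real.rpow_le_rpow hx.le hxy.le hp0
    have h2 : (0:ℝ) < y ^ p := Real.rpow_pos_of_pos (hx.trans hxy) p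
    have h3 : x ^ p * (x - R) ≤ y ^ p * (x - R) :=
      mul_le_mul_of_nonneg_right h1 (sub_nonneg.mpr hRx)
    have h4 : y ^ p * (x - R) < y ^ p * (y - R) := by
      apply mul_lt_mul_of_pos_left _ h2
      linarith
    linarith
  -- rewriting the closure relation
  have heq : ∀ z : ℝ, 0 < z → (1 - R / z) * z ^ γ = z ^ p * (z - R) := by
    intro z hz
    have h1 : z ^ γ = z ^ p * z := by
      rw [hp, ← Real.rpow_add_one hz.ne' (γ - 1)]; ring_nf
    rw [h1]
    field_simp
  -- an upper bound point
  set b : ℝ := max (R + Q) 1 with hb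
  have hb1 : (1:ℝ) ≤ b := le_max_right _ _
  have hbR : R ≤ b := le_trans (by linarith) (le_max_left _ _)
  have hbQ : Q ≤ b ^ p * (b - R) := by
    have h1 : (1:ℝ) ≤ b ^ p := Real.one_le_rpow hb1 hp0
    have h2 : Q ≤ b - R := by
      have := le_max_left (R + Q) 1
      linarith
    calc Q ≤ 1 * (b - R) := by linarith
    _ ≤ b ^ p * (b - R) := mul_le_mul_of_nonneg_right h1 (by linarith)
  -- continuity
  have hc : Continuous fun z : ℝ => z ^ p * (z - R) := by
    apply Continuous.mul
    · exact continuous_iff_continuousAt.mpr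
        fun x => Real.continuousAt_rpow_const x p (Or.inr hp0)
    · exact continuous_id.sub continuous_const
  -- intermediate value theorem
  have hRf : R ^ p * (R - R) = 0 := by ring
  have hivt := intermediate_value_Icc hbR hc.continuousOn
  have hQmem : Q ∈ Set.Icc (R ^ p * (R - R)) (b ^ p * (b - R)) := by
    rw [hRf]; exact ⟨hQ, hbQ⟩
  obtain ⟨Z, hZmem, hZeq⟩ := hivt hQmem
  have hZeq' : Z ^ p * (Z - R) = Q := hZeq
  have hZR : R ≤ Z := hZmem.1
  have hZpos : 0 < Z := by
    rcases (hR.trans hZR).lt_or_eq with h | h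
    · exact h
    · exfalso
      have hZ0 : Z = 0 := h.symm
      have hR0 : R = 0 := le_antisymm (hZ0 ▸ hZR) hR
      have hQ0 : Q = 0 := by
        rw [hZ0, hR0] at hZeq'
        simpa using hZeq'.symm
      rw [hR0, hQ0] at hpos
      linarith
  refine ⟨Z, ⟨hZpos, hZR, by rw [heq Z hZpos, hZeq']⟩, ?_⟩
  rintro y ⟨hy0, hyR, hyQ⟩
  rw [heq y hy0] at hyQ
  rcases lt_trichotomy y Z with h | h | h
  · exfalso
    have := hmono y Z hy0 hyR h
    rw [← hyQ, hZeq'] at this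
    exact lt_irrefl _ this
  · exact h
  · exfalso
    have := hmono Z y hZpos hZR h
    rw [← hyQ, hZeq'] at this
    exact lt_irrefl _ this
end

section
/- Let γ⁺ ≥ γ⁻ > 1, γ = γ⁺/γ⁻, Z > 0, 0 ≤ R ≤ Z. With ∂_Q Z and ∂_R Z as above, one has γ^{-1} Z^{γ⁺ - γ} ≤ Z^{γ⁺ - 1} ∂_Q Z ≤ Z^{γ⁺ - γ} and γ^{-1} Z^{γ⁺ - 1} ≤ Z^{γ⁺ - 1} ∂_R Z ≤ Z^{γ⁺ - 1}. -/
open Real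

/-- Bounds on the pressure-gradient coefficients `Z^{γ⁺-1} ∂_Q Z` and
`Z^{γ⁺-1} ∂_R Z`, where `γ = γ⁺/γ⁻` and `γ⁺ ≥ γ⁻ > 1`. -/
theorem pressure_coefficient_bounds (γp γm R Z : ℝ) (h1 : 1 < γm)
    (h2 : γm ≤ γp) (hZ : 0 < Z) (hR : 0 ≤ R) (hRZ : R ≤ Z) :
    let γ := γp / γm
    let dQ := 1 / (γ * Z ^ (γ - 1) - R * (γ - 1) * Z ^ (γ - 2))
    let dR := Z ^ (γ - 1) / (γ * Z ^ (γ - 1) - R * (γ - 1) * Z ^ (γ - 2))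
    γ⁻¹ * Z ^ (γp - γ) ≤ Z ^ (γp - 1) * dQ ∧
      Z ^ (γp - 1) * dQ ≤ Z ^ (γp - γ) ∧
      γ⁻¹ * Z ^ (γp - 1) ≤ Z ^ (γp - 1) * dR ∧
      Z ^ (γp - 1) * dR ≤ Z ^ (γp - 1) := by
  intro γ dQ dR
  have hγ1 : 1 ≤ γ := (one_le_div (by linarith)).mpr h2
  have hγ0 : 0 < γ := by linarith
  have hP : ∀ x : ℝ, (0:ℝ) < Z ^ x := fun x => rpow_pos_of_pos hZ x
  have hmul : Z ^ (γ - 2) * Z = Z ^ (γ - 1) := by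
    rw [← rpow_add_one hZ.ne']; ring_nf
  set D := γ * Z ^ (γ - 1) - R * (γ - 1) * Z ^ (γ - 2) with hDdef
  have hD1 : Z ^ (γ - 1) ≤ D := by
    have : R * (γ - 1) * Z ^ (γ - 2) ≤ Z * (γ - 1) * Z ^ (γ - 2) := by
      apply mul_le_mul_of_nonneg_right (mul_le_mul_of_nonneg_right hRZ (by linarith))
        (le_of_lt (hP _))
    have h2' : Z * (γ - 1) * Z ^ (γ - 2) = (γ - 1) * Z ^ (γ - 1) := by
      rw [mul_comm Z (γ - 1), mul_assoc, mul_comm Z, hmul]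
    nlinarith [hP (γ - 1)]
  have hD2 : D ≤ γ * Z ^ (γ - 1) := by
    have : 0 ≤ R * (γ - 1) * Z ^ (γ - 2) :=
      mul_nonneg (mul_nonneg hR (by linarith)) (le_of_lt (hP _))
    linarith
  have hDpos : 0 < D := lt_of_lt_of_le (hP _) hD1
  have hsplit : Z ^ (γp - 1) = Z ^ (γp - γ) * Z ^ (γ - 1) := by
    rw [← rpow_add hZ]; ring_nf
  constructor
  · rw [show Z ^ (γp - 1) * dQ = Z ^ (γp - 1) / D by simp [dQ]; ring]
    rw [hsplit, le_div_iff₀ hDpos]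
    calc γ⁻¹ * Z ^ (γp - γ) * D ≤ γ⁻¹ * Z ^ (γp - γ) * (γ * Z ^ (γ - 1)) := by
          apply mul_le_mul_of_nonneg_left hD2
          exact mul_nonneg (by positivity) (le_of_lt (hP _))
      _ = Z ^ (γp - γ) * Z ^ (γ - 1) := by field_simp
  constructor
  · rw [show Z ^ (γp - 1) * dQ = Z ^ (γp - 1) / D by simp [dQ]; ring]
    rw [hsplit]
    rw [div_le_iff₀ hDpos]
    exact mul_le_mul_of_nonneg_left hD1 (le_of_lt (hP _))
  constructor
  · rw [show Z ^ (γp - 1) * dR = Z ^ (γp - 1) * Z ^ (γ - 1) / D by simp [dR]; ring]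
    rw [le_div_iff₀ hDpos]
    calc γ⁻¹ * Z ^ (γp - 1) * D ≤ γ⁻¹ * Z ^ (γp - 1) * (γ * Z ^ (γ - 1)) := by
          apply mul_le_mul_of_nonneg_left hD2
          exact mul_nonneg (by positivity) (le_of_lt (hP _))
      _ = Z ^ (γp - 1) * Z ^ (γ - 1) := by field_simp
  · rw [show Z ^ (γp - 1) * dR = Z ^ (γp - 1) * Z ^ (γ - 1) / D by simp [dR]; ring]
    rw [div_le_iff₀ hDpos]
    exact mul_le_mul_of_nonneg_left hD1 (le_of_lt (hP _))
end

section
/- Let γ ≥ 1 and suppose (R₁,Q₁,Z₁), (R₂,Q₂,Z₂) satisfy Qᵢ = (1 - Rᵢ/Zᵢ) Zᵢ^γ with 0 ≤ Rᵢ ≤ Zᵢ and Zᵢ ≥ m > 0 for i = 1,2. Then |Z₁ - Z₂| ≤ C(γ, m, max(Z₁,Z₂)) (|R₁ - R₂| + |Q₁ - Q₂|) for some constant C depending only on γ, the lower bound m and an upper bound on Z₁, Z₂. -/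
open Real

/-!
Writing the closure as `Q = (Z - R) Z^s` with `s = γ - 1 ≥ 0`, for `Z₂ ≤ Z₁` one has the identity
`Q₁ - Q₂ = Z₁^s ((Z₁ - Z₂) - (R₁ - R₂)) + (Z₁^s - Z₂^s)(Z₂ - R₂)`, whose last term is nonnegative
because `Z ↦ Z^s` is monotone and `R₂ ≤ Z₂`. Hence `m^s (Z₁ - Z₂) ≤ Z₁^s (Z₁ - Z₂)` is bounded by
`|Q₁ - Q₂| + Mb^s |R₁ - R₂|`, which is the Lipschitz bound with `C = max 1 (Mb^s) / m^s`.
-/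

lemma one_sub_div_mul_rpow_eq {γ R Z : ℝ} (hZ : 0 < Z) :
    (1 - R / Z) * Z ^ γ = (Z - R) * Z ^ (γ - 1) := by
  rw [show Z ^ γ = Z ^ (γ - 1) * Z by rw [← rpow_add_one hZ.ne']; ring_nf]
  field_simp

section

variable {s m M R₁ R₂ Z₁ Z₂ : ℝ}

lemma rpow_mul_sub_le_of_le (hs : 0 ≤ s) (hZ₂ : 0 ≤ Z₂) (hRZ₂ : R₂ ≤ Z₂) (hZ : Z₂ ≤ Z₁) :
    Z₁ ^ s * (Z₁ - Z₂) ≤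
      ((Z₁ - R₁) * Z₁ ^ s - (Z₂ - R₂) * Z₂ ^ s) + Z₁ ^ s * (R₁ - R₂) := by
  have hmono : Z₂ ^ s ≤ Z₁ ^ s := rpow_le_rpow hZ₂ hZ hs
  have hdefect : 0 ≤ (Z₁ ^ s - Z₂ ^ s) * (Z₂ - R₂) :=
    mul_nonneg (sub_nonneg.2 hmono) (sub_nonneg.2 hRZ₂)
  linarith

lemma rpow_mul_abs_sub_le (hs : 0 ≤ s) (hm : 0 < m)
    (hRZ₁ : R₁ ≤ Z₁) (hmZ₁ : m ≤ Z₁) (hZM₁ : Z₁ ≤ M)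
    (hRZ₂ : R₂ ≤ Z₂) (hmZ₂ : m ≤ Z₂) (hZM₂ : Z₂ ≤ M) :
    m ^ s * |Z₁ - Z₂| ≤
      |(Z₁ - R₁) * Z₁ ^ s - (Z₂ - R₂) * Z₂ ^ s| + M ^ s * |R₁ - R₂| := by
  wlog hZ : Z₂ ≤ Z₁ generalizing R₁ R₂ Z₁ Z₂
  · have := this hRZ₂ hmZ₂ hZM₂ hRZ₁ hmZ₁ hZM₁ (not_le.1 hZ).le
    rwa [abs_sub_comm Z₂, abs_sub_comm ((Z₂ - R₂) * _), abs_sub_comm R₂] at this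
  have hZ₁s : m ^ s ≤ Z₁ ^ s := rpow_le_rpow hm.le hmZ₁ hs
  have hZ₁s' : Z₁ ^ s ≤ M ^ s := rpow_le_rpow (hm.le.trans hmZ₁) hZM₁ hs
  calc m ^ s * |Z₁ - Z₂|
      = m ^ s * (Z₁ - Z₂) := by rw [abs_of_nonneg (sub_nonneg.2 hZ)]
    _ ≤ Z₁ ^ s * (Z₁ - Z₂) := mul_le_mul_of_nonneg_right hZ₁s (sub_nonneg.2 hZ)
    _ ≤ ((Z₁ - R₁) * Z₁ ^ s - (Z₂ - R₂) * Z₂ ^ s) + Z₁ ^ s * (R₁ - R₂) :=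
      rpow_mul_sub_le_of_le hs (hm.le.trans hmZ₂) hRZ₂ hZ
    _ ≤ |(Z₁ - R₁) * Z₁ ^ s - (Z₂ - R₂) * Z₂ ^ s| + M ^ s * |R₁ - R₂| := by
      refine add_le_add (le_abs_self _) ?_
      exact (mul_le_mul_of_nonneg_left (le_abs_self _) (rpow_nonneg (hm.le.trans hmZ₁) _)).trans
        (mul_le_mul_of_nonneg_right hZ₁s' (abs_nonneg _))

end

/-- Local Lipschitz continuity of the implicit function `Z = Z(R,Q)` defined
by `Q = (1 - R/Z) Z^γ`, on a region where `Z` is bounded below by `m > 0` and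
above by `Mb`. -/
theorem Z_lipschitz (γ m Mb : ℝ) (hγ : 1 ≤ γ) (hm : 0 < m) :
    ∃ C > (0 : ℝ), ∀ R₁ Q₁ Z₁ R₂ Q₂ Z₂ : ℝ,
      0 ≤ R₁ → R₁ ≤ Z₁ → m ≤ Z₁ → Z₁ ≤ Mb →
      Q₁ = (1 - R₁ / Z₁) * Z₁ ^ γ →
      0 ≤ R₂ → R₂ ≤ Z₂ → m ≤ Z₂ → Z₂ ≤ Mb →
      Q₂ = (1 - R₂ / Z₂) * Z₂ ^ γ →
      |Z₁ - Z₂| ≤ C * (|R₁ - R₂| + |Q₁ - Q₂|) := by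
  have hs : 0 ≤ γ - 1 := sub_nonneg.2 hγ
  have hms : 0 < m ^ (γ - 1) := rpow_pos_of_pos hm _
  have hK : 1 ≤ max 1 (Mb ^ (γ - 1)) := le_max_left _ _
  refine ⟨max 1 (Mb ^ (γ - 1)) / m ^ (γ - 1), div_pos (by linarith) hms, ?_⟩
  intro R₁ Q₁ Z₁ R₂ Q₂ Z₂ _ hRZ₁ hmZ₁ hZM₁ hQ₁ _ hRZ₂ hmZ₂ hZM₂ hQ₂
  rw [one_sub_div_mul_rpow_eq (hm.trans_le hmZ₁)] at hQ₁
  rw [one_sub_div_mul_rpow_eq (hm.trans_le hmZ₂)] at hQ₂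
  have hbound := rpow_mul_abs_sub_le hs hm hRZ₁ hmZ₁ hZM₁ hRZ₂ hmZ₂ hZM₂
  rw [← hQ₁, ← hQ₂] at hbound
  rw [div_mul_eq_mul_div, le_div_iff₀ hms]
  have hR := abs_nonneg (R₁ - R₂)
  have hQ := abs_nonneg (Q₁ - Q₂)
  nlinarith [le_max_right 1 (Mb ^ (γ - 1))]
end
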